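/- Suppose F is nonempty, O = {J_n} consists of a single open-shop job with processing time q_n satisfying p_max < q_n < P(F). Consider feasible schedules in which J_n is processed in machine order ⟨M2, M3, M1⟩, i.e., C_n^2 ≤ S_n^3 and C_n^3 ≤ S_n^1. Then every such schedule has makespan at least 2·q_n + P(F), and there exists such a schedule with makespan exactly 2·q_n + P(F). The same two assertions hold for schedules in which J_n is processed in machine order ⟨M3, M1, M2⟩, i.e., C_n^3 ≤ S_n^1 and C_n^1 ≤ S_n^2. -/

import Mathlib

open Finset

noncomputable section

/-- Processing time of a job: `p` on flow-shop jobs, `q` otherwise. -/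
def jobTime {J : Type*} [DecidableEq J] (F : Finset J) (p q : J → ℝ) (j : J) : ℝ :=
  if j ∈ F then p j else q j

/-- Feasibility of a schedule given by start times `S j i` of job `j` on machine `i`
(machines `M1, M2, M3` are machines `0, 1, 2`):
all start times are nonnegative, on each machine the open processing intervals of
distinct jobs are pairwise disjoint, for each job the open processing intervals on the
three machines are pairwise disjoint, and each flow-shop job goes through
`M1`, `M2`, `M3` in this order. -/
def Feasible {J : Type*} [DecidableEq J] (F O : Finset J) (p q : J → ℝ)
    (S : J → Fin 3 → ℝ) : Prop :=
  (∀ j ∈ F ∪ O, ∀ i : Fin 3, 0 ≤ S j i) ∧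
  (∀ i : Fin 3, ∀ j ∈ F ∪ O, ∀ k ∈ F ∪ O, j ≠ k →
    S j i + jobTime F p q j ≤ S k i ∨ S k i + jobTime F p q k ≤ S j i) ∧
  (∀ j ∈ F ∪ O, ∀ i i' : Fin 3, i ≠ i' →
    S j i + jobTime F p q j ≤ S j i' ∨ S j i' + jobTime F p q j ≤ S j i) ∧
  (∀ j ∈ F, S j 0 + p j ≤ S j 1 ∧ S j 1 + p j ≤ S j 2)

/-- Makespan: supremum of all completion times of the jobs of `F ∪ O`. -/
def makespan {J : Type*} [DecidableEq J] (F O : Finset J) (p q : J → ℝ)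
    (S : J → Fin 3 → ℝ) : ℝ :=
  sSup {x : ℝ | ∃ j ∈ F ∪ O, ∃ i : Fin 3, x = S j i + jobTime F p q j}

open MeasureTheory

/-!
Lower bound: let `J_n` be processed on machine `u` before machine `v`, `u < v`. A flow-shop job
that finishes on `u` before `S_n^u` (and on `v` before `S_n^v`) runs on `M1` inside
`[0, S_n^u]`; one that finishes on `v` before `S_n^v` but not on `u` before `S_n^u` runs on `v`
inside `[C_n^u, S_n^v]`; every other one runs on `M3` inside `[C_n^v, C_max]`. These three windows
have total length `C_max - 2 q_n`, and jobs on one machine do not overlap, so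
`P(F) ≤ C_max - 2 q_n`.

Upper bound: run the flow-shop jobs back to back in a fixed order on every machine, the block
on `M_{i+1}` shifted by `i q_n`; as `p_max ≤ q_n` this respects the flow-shop constraints, and
`M_{i+1}` is busy with flow-shop jobs only inside `[i q_n, i q_n + P(F)]`. Since `q_n ≤ P(F)`,
`J_n` fits around these blocks in either machine order and finishes by `2 q_n + P(F)`.
-/

theorem sum_le_sub_of_pairwise_disjoint {ι : Type*} (T : Finset ι) (s L : ι → ℝ) {a b : ℝ}
    (hab : a ≤ b) (hL : ∀ j ∈ T, 0 ≤ L j)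
    (hdisj : ∀ j ∈ T, ∀ k ∈ T, j ≠ k → s j + L j ≤ s k ∨ s k + L k ≤ s j)
    (ha : ∀ j ∈ T, a ≤ s j) (hb : ∀ j ∈ T, s j + L j ≤ b) :
    ∑ j ∈ T, L j ≤ b - a := by
  have hpd : (T : Set ι).PairwiseDisjoint fun j => Set.Ioc (s j) (s j + L j) := by
    intro j hj k hk hne
    rcases hdisj j hj k hk hne with h | h
    · exact Set.Ioc_disjoint_Ioc_of_le h
    · exact (Set.Ioc_disjoint_Ioc_of_le h).symm
  have hvol : ENNReal.ofReal (∑ j ∈ T, L j) ≤ ENNReal.ofReal (b - a) := calc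
    ENNReal.ofReal (∑ j ∈ T, L j) = ∑ j ∈ T, volume (Set.Ioc (s j) (s j + L j)) := by
      simp [ENNReal.ofReal_sum_of_nonneg hL, Real.volume_Ioc]
    _ = volume (⋃ j ∈ T, Set.Ioc (s j) (s j + L j)) :=
      (measure_biUnion_finset hpd fun _ _ => measurableSet_Ioc).symm
    _ ≤ volume (Set.Icc a b) := measure_mono <| Set.iUnion₂_subset fun j hj =>
      Set.Ioc_subset_Icc_self.trans (Set.Icc_subset_Icc (ha j hj) (hb j hj))
    _ = ENNReal.ofReal (b - a) := Real.volume_Icc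
  exact (ENNReal.ofReal_le_ofReal_iff (sub_nonneg.2 hab)).1 hvol

section PrefixSum

variable {J : Type*} (F : Finset J) (r : J → ℕ) (p : J → ℝ)

def prefixSum (j : J) : ℝ := ∑ k ∈ F with r k < r j, p k

variable {F r p} {j k : J}

theorem prefixSum_nonneg (hp : ∀ j ∈ F, 0 ≤ p j) (j : J) : 0 ≤ prefixSum F r p j :=
  sum_nonneg fun k hk => hp k (mem_filter.1 hk).1

theorem prefixSum_add_eq_sum_insert [DecidableEq J] (j : J) :
    prefixSum F r p j + p j = ∑ k ∈ insert j (F.filter fun k => r k < r j), p k := by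
  rw [sum_insert (by simp), add_comm, prefixSum]

theorem prefixSum_add_le_sum [DecidableEq J] (hp : ∀ j ∈ F, 0 ≤ p j) (hj : j ∈ F) :
    prefixSum F r p j + p j ≤ ∑ k ∈ F, p k :=
  (prefixSum_add_eq_sum_insert j).trans_le <| sum_le_sum_of_subset_of_nonneg
    (insert_subset hj (filter_subset _ _)) fun k hk _ => hp k hk

theorem prefixSum_add_le_prefixSum [DecidableEq J] (hp : ∀ j ∈ F, 0 ≤ p j) (hj : j ∈ F)
    (hjk : r j < r k) :
    prefixSum F r p j + p j ≤ prefixSum F r p k := by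
  refine (prefixSum_add_eq_sum_insert j).trans_le <| sum_le_sum_of_subset_of_nonneg ?_
    fun l hl _ => hp l (mem_filter.1 hl).1
  refine insert_subset (mem_filter.2 ⟨hj, hjk⟩) fun l hl => ?_
  obtain ⟨hlF, hlj⟩ := mem_filter.1 hl
  exact mem_filter.2 ⟨hlF, hlj.trans hjk⟩

theorem prefixSum_disjoint [DecidableEq J] (hr : Set.InjOn r F) (hp : ∀ j ∈ F, 0 ≤ p j)
    (hj : j ∈ F) (hk : k ∈ F) (hne : j ≠ k) :
    prefixSum F r p j + p j ≤ prefixSum F r p k ∨ prefixSum F r p k + p k ≤ prefixSum F r p j :=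
  (lt_or_gt_of_ne (hr.ne hj hk hne)).imp (prefixSum_add_le_prefixSum hp hj)
    (prefixSum_add_le_prefixSum hp hk)

end PrefixSum

section Schedule

variable {J : Type*} [DecidableEq J] {F O : Finset J} {jn j k : J} {p q : J → ℝ}
  {S : J → Fin 3 → ℝ}

theorem jobTime_of_mem (hj : j ∈ F) : jobTime F p q j = p j := if_pos hj

theorem jobTime_of_notMem (hj : j ∉ F) : jobTime F p q j = q j := if_neg hj

theorem le_makespan (hj : j ∈ F ∪ O) (i : Fin 3) :
    S j i + jobTime F p q j ≤ makespan F O p q S := by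
  refine le_csSup ?_ ⟨j, hj, i, rfl⟩
  refine (((F ∪ O) ×ˢ (univ : Finset (Fin 3))).finite_toSet.image
    fun x => S x.1 x.2 + jobTime F p q x.1).bddAbove.mono ?_
  rintro _ ⟨k, hk, i', rfl⟩
  exact ⟨(k, i'), by simpa using hk, rfl⟩

theorem makespan_eq_of_forall_le {M : ℝ} (hle : ∀ j ∈ F ∪ O, ∀ i, S j i + jobTime F p q j ≤ M)
    (hj : j ∈ F ∪ O) {i : Fin 3} (hM : S j i + jobTime F p q j = M) :
    makespan F O p q S = M :=
  IsGreatest.csSup_eq ⟨⟨j, hj, i, hM.symm⟩, by rintro _ ⟨k, hk, i', rfl⟩; exact hle k hk i'⟩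

theorem Feasible.flow_disjoint (hS : Feasible F O p q S) (i : Fin 3) (hj : j ∈ F) (hk : k ∈ F)
    (hne : j ≠ k) : S j i + p j ≤ S k i ∨ S k i + p k ≤ S j i := by
  simpa only [jobTime_of_mem hj, jobTime_of_mem hk] using
    hS.2.1 i j (mem_union_left _ hj) k (mem_union_left _ hk) hne

theorem Feasible.flow_open_disjoint (hS : Feasible F {jn} p q S) (hjn : jn ∉ F) (i : Fin 3)
    (hj : j ∈ F) : S j i + p j ≤ S jn i ∨ S jn i + q jn ≤ S j i := by
  simpa only [jobTime_of_mem hj, jobTime_of_notMem hjn] using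
    hS.2.1 i j (mem_union_left _ hj) jn (mem_union_right _ (mem_singleton_self jn))
      (ne_of_mem_of_not_mem hj hjn)

theorem Feasible.flow_add_le (hS : Feasible F O p q S) (hp : ∀ j ∈ F, 0 ≤ p j) (hj : j ∈ F)
    {i i' : Fin 3} (h : i < i') : S j i + p j ≤ S j i' := by
  obtain ⟨h01, h12⟩ := hS.2.2.2 j hj
  have := hp j hj
  fin_cases i <;> fin_cases i' <;> simp at h ⊢ <;> linarith

theorem Feasible.flow_mono (hS : Feasible F O p q S) (hp : ∀ j ∈ F, 0 ≤ p j) (hj : j ∈ F)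
    {i i' : Fin 3} (h : i ≤ i') : S j i ≤ S j i' := by
  rcases h.eq_or_lt with rfl | h
  · rfl
  · linarith [hS.flow_add_le hp hj h, hp j hj]

theorem Feasible.sum_le_of_mem_window (hS : Feasible F O p q S) (hp : ∀ j ∈ F, 0 ≤ p j)
    (i : Fin 3) {T : Finset J} (hT : T ⊆ F) {a b : ℝ} (hab : a ≤ b)
    (ha : ∀ j ∈ T, a ≤ S j i) (hb : ∀ j ∈ T, S j i + p j ≤ b) :
    ∑ j ∈ T, p j ≤ b - a :=
  sum_le_sub_of_pairwise_disjoint T (S · i) p hab (fun j hj => hp j (hT hj))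
    (fun _ hj _ hk => hS.flow_disjoint i (hT hj) (hT hk)) ha hb

theorem Feasible.two_mul_add_sum_le_makespan (hS : Feasible F {jn} p q S) (hjn : jn ∉ F)
    (hp : ∀ j ∈ F, 0 ≤ p j) {u v : Fin 3} (huv : u < v) (hn : S jn u + q jn ≤ S jn v) :
    2 * q jn + ∑ j ∈ F, p j ≤ makespan F {jn} p q S := by
  have hjn_mem : jn ∈ F ∪ {jn} := mem_union_right _ (mem_singleton_self jn)
  set M := makespan F {jn} p q S
  set A := F.filter fun j => S j v + p j ≤ S jn v
  set X := A.filter fun j => S j u + p j ≤ S jn u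
  have hX : ∑ j ∈ X, p j ≤ S jn u - 0 := by
    refine hS.sum_le_of_mem_window hp 0 ((filter_subset _ _).trans (filter_subset _ _))
      (hS.1 jn hjn_mem u) (fun j hj => hS.1 j (mem_union_left _ ?_) 0) fun j hj => ?_
    · exact (mem_filter.1 (mem_filter.1 hj).1).1
    · have hjF := (mem_filter.1 (mem_filter.1 hj).1).1
      linarith [(mem_filter.1 hj).2, hS.flow_mono hp hjF (Fin.zero_le u)]
  have hY : ∑ j ∈ A.filter (fun j => ¬ S j u + p j ≤ S jn u), p j ≤
      S jn v - (S jn u + q jn) := by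
    refine hS.sum_le_of_mem_window hp v ((filter_subset _ _).trans (filter_subset _ _)) hn
      (fun j hj => ?_) fun j hj => (mem_filter.1 (mem_filter.1 hj).1).2
    obtain ⟨hjA, hju⟩ := mem_filter.1 hj
    have hjF := (mem_filter.1 hjA).1
    have hnu := (hS.flow_open_disjoint hjn u hjF).resolve_left hju
    linarith [hS.flow_add_le hp hjF huv, hp j hjF]
  have hZ : ∑ j ∈ F.filter (fun j => ¬ S j v + p j ≤ S jn v), p j ≤
      M - (S jn v + q jn) := by
    refine hS.sum_le_of_mem_window hp 2 (filter_subset _ _) ?_ (fun j hj => ?_) fun j hj => ?_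
    · simpa only [jobTime_of_notMem hjn] using le_makespan hjn_mem v
    · obtain ⟨hjF, hjv⟩ := mem_filter.1 hj
      have hnv := (hS.flow_open_disjoint hjn v hjF).resolve_left hjv
      linarith [hS.flow_mono hp hjF (show v ≤ 2 from Fin.le_last v)]
    · have hjF := (mem_filter.1 hj).1
      simpa only [jobTime_of_mem hjF] using le_makespan (mem_union_left _ hjF) 2
  rw [← sum_filter_add_sum_filter_not F fun j => S j v + p j ≤ S jn v,
    ← sum_filter_add_sum_filter_not A fun j => S j u + p j ≤ S jn u]
  linarith

section BlockSchedule

variable (F jn) (r : J → ℕ) (p q) (t : Fin 3 → ℝ)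

def blockSchedule (j : J) (i : Fin 3) : ℝ :=
  if j = jn then t i else i.val * q jn + prefixSum F r p j

variable {F jn r p q t}

theorem blockSchedule_self (i : Fin 3) : blockSchedule F jn p q r t jn i = t i := if_pos rfl

theorem blockSchedule_of_mem (hjn : jn ∉ F) (hj : j ∈ F) (i : Fin 3) :
    blockSchedule F jn p q r t j i = i.val * q jn + prefixSum F r p j :=
  if_neg (ne_of_mem_of_not_mem hj hjn)

theorem feasible_blockSchedule (hjn : jn ∉ F) (hr : Set.InjOn r F) (hp : ∀ j ∈ F, 0 ≤ p j)
    (hpq : ∀ j ∈ F, p j ≤ q jn) (hq : 0 ≤ q jn) (ht0 : ∀ i, 0 ≤ t i)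
    (htF : ∀ i : Fin 3, t i + q jn ≤ i.val * q jn ∨ i.val * q jn + ∑ j ∈ F, p j ≤ t i)
    (htt : ∀ i i' : Fin 3, i ≠ i' → t i + q jn ≤ t i' ∨ t i' + q jn ≤ t i) :
    Feasible F {jn} p q (blockSchedule F jn p q r t) := by
  set S := blockSchedule F jn p q r t
  have hSF : ∀ j ∈ F, ∀ i, S j i = i.val * q jn + prefixSum F r p j :=
    fun j hj i => blockSchedule_of_mem hjn hj i
  have hSn : ∀ i, S jn i = t i := blockSchedule_self
  have hmem : ∀ j ∈ F ∪ {jn}, j ∈ F ∨ j = jn := fun j hj =>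
    (mem_union.1 hj).imp_right mem_singleton.1
  have hFn : ∀ j ∈ F, ∀ i, S j i + p j ≤ S jn i ∨ S jn i + q jn ≤ S j i := by
    intro j hj i
    rw [hSF j hj, hSn]
    have := prefixSum_add_le_sum hp hj (r := r)
    have := prefixSum_nonneg hp j (r := r)
    rcases htF i with h | h
    · right; linarith
    · left; linarith
  refine ⟨fun j hj i => ?_, fun i j hj k hk hne => ?_, fun j hj i i' hne => ?_, fun j hj => ?_⟩
  · rcases hmem j hj with hjF | rfl
    · rw [hSF j hjF]
      have := prefixSum_nonneg hp j (r := r)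
      positivity
    · rw [hSn]; exact ht0 i
  · rcases hmem j hj with hjF | rfl <;> rcases hmem k hk with hkF | rfl
    · rw [jobTime_of_mem hjF, jobTime_of_mem hkF, hSF j hjF, hSF k hkF]
      exact (prefixSum_disjoint hr hp hjF hkF hne).imp (by intro; linarith) (by intro; linarith)
    · rw [jobTime_of_mem hjF, jobTime_of_notMem hjn]; exact hFn j hjF i
    · rw [jobTime_of_mem hkF, jobTime_of_notMem hjn]; exact (hFn k hkF i).symm
    · exact absurd rfl hne
  · rcases hmem j hj with hjF | rfl
    · rw [jobTime_of_mem hjF, hSF j hjF, hSF j hjF]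
      have hstep : ∀ a b : Fin 3, a < b → a.val * q jn + p j ≤ b.val * q jn := by
        intro a b h
        have : (a.val : ℝ) + 1 ≤ b.val := by exact_mod_cast Fin.lt_def.1 h
        nlinarith [hpq j hjF]
      rcases lt_or_gt_of_ne hne with h | h
      · left; linarith [hstep i i' h]
      · right; linarith [hstep i' i h]
    · rw [jobTime_of_notMem hjn, hSn, hSn]; exact htt i i' hne
  · rw [hSF j hj, hSF j hj, hSF j hj]
    have := hpq j hj
    constructor <;> simp only [Fin.val_zero, Fin.val_one, Fin.val_two] <;> push_cast <;> linarith

theorem makespan_blockSchedule (hjn : jn ∉ F) (hp : ∀ j ∈ F, 0 ≤ p j) (hq : 0 ≤ q jn)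
    (htM : ∀ i, t i + q jn ≤ 2 * q jn + ∑ j ∈ F, p j) {i₀ : Fin 3}
    (hi₀ : t i₀ + q jn = 2 * q jn + ∑ j ∈ F, p j) :
    makespan F {jn} p q (blockSchedule F jn p q r t) = 2 * q jn + ∑ j ∈ F, p j := by
  refine makespan_eq_of_forall_le (fun j hj i => ?_) (mem_union_right _ (mem_singleton_self jn))
    (i := i₀) (by rw [blockSchedule_self, jobTime_of_notMem hjn, hi₀])
  rcases (mem_union.1 hj).imp_right mem_singleton.1 with hjF | rfl
  · rw [jobTime_of_mem hjF, blockSchedule_of_mem hjn hjF]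
    have : (i.val : ℝ) ≤ 2 := by exact_mod_cast Nat.lt_succ_iff.1 i.isLt
    nlinarith [prefixSum_add_le_sum hp hjF (r := r)]
  · rw [jobTime_of_notMem hjn, blockSchedule_self]; exact htM i

end BlockSchedule

theorem exists_schedule_of_open_times (hjn : jn ∉ F) (hp : ∀ j ∈ F, 0 ≤ p j)
    (hpq : ∀ j ∈ F, p j ≤ q jn) (hq : 0 ≤ q jn) {t : Fin 3 → ℝ} (ht0 : ∀ i, 0 ≤ t i)
    (htF : ∀ i : Fin 3, t i + q jn ≤ i.val * q jn ∨ i.val * q jn + ∑ j ∈ F, p j ≤ t i)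
    (htt : ∀ i i' : Fin 3, i ≠ i' → t i + q jn ≤ t i' ∨ t i' + q jn ≤ t i)
    (htM : ∀ i, t i + q jn ≤ 2 * q jn + ∑ j ∈ F, p j) {i₀ : Fin 3}
    (hi₀ : t i₀ + q jn = 2 * q jn + ∑ j ∈ F, p j) :
    ∃ S, Feasible F {jn} p q S ∧ (∀ i, S jn i = t i) ∧
      makespan F {jn} p q S = 2 * q jn + ∑ j ∈ F, p j := by
  obtain ⟨r, hr⟩ := Set.countable_iff_exists_injOn.1 F.countable_toSet
  exact ⟨blockSchedule F jn p q r t, feasible_blockSchedule hjn hr hp hpq hq ht0 htF htt,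
    blockSchedule_self, makespan_blockSchedule hjn hp hq htM hi₀⟩

theorem exists_schedule_M2_M3_M1 (hjn : jn ∉ F) (hp : ∀ j ∈ F, 0 ≤ p j)
    (hpq : ∀ j ∈ F, p j ≤ q jn) (hq : 0 ≤ q jn) (hqP : q jn ≤ ∑ j ∈ F, p j) :
    ∃ S, Feasible F {jn} p q S ∧ S jn 1 + q jn ≤ S jn 2 ∧ S jn 2 + q jn ≤ S jn 0 ∧
      makespan F {jn} p q S = 2 * q jn + ∑ j ∈ F, p j := by
  refine (exists_schedule_of_open_times hjn hp hpq hq (t := ![q jn + ∑ j ∈ F, p j, 0, q jn])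
    (i₀ := 0) ?_ ?_ ?_ ?_ ?_).imp fun S ⟨hS, hSt, hM⟩ =>
      ⟨hS, by simp [hSt], by simp [hSt]; linarith, hM⟩
  all_goals simp [Fin.forall_fin_succ]
  all_goals repeat' first | apply And.intro | (left; linarith) | (right; linarith) | linarith

theorem exists_schedule_M3_M1_M2 (hjn : jn ∉ F) (hp : ∀ j ∈ F, 0 ≤ p j)
    (hpq : ∀ j ∈ F, p j ≤ q jn) (hq : 0 ≤ q jn) (hqP : q jn ≤ ∑ j ∈ F, p j) :
    ∃ S, Feasible F {jn} p q S ∧ S jn 2 + q jn ≤ S jn 0 ∧ S jn 0 + q jn ≤ S jn 1 ∧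
      makespan F {jn} p q S = 2 * q jn + ∑ j ∈ F, p j := by
  refine (exists_schedule_of_open_times hjn hp hpq hq
    (t := ![∑ j ∈ F, p j, ∑ j ∈ F, p j + q jn, 0]) (i₀ := 1) ?_ ?_ ?_ ?_ ?_).imp
      fun S ⟨hS, hSt, hM⟩ => ⟨hS, by simp [hSt]; linarith, by simp [hSt], hM⟩
  all_goals simp [Fin.forall_fin_succ]
  all_goals repeat' first | apply And.intro | (left; linarith) | (right; linarith) | linarith

end Schedule

/-- Lemma 6.3: suppose `O = {jn}` with `p_max < q_n < P(F)`. Among the feasible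
schedules in which `jn` is processed in machine order `⟨M2, M3, M1⟩`
(i.e. `C_n^2 ≤ S_n^3` and `C_n^3 ≤ S_n^1`), every one has makespan at least
`2 q_n + P(F)` and one attains exactly `2 q_n + P(F)`; the same holds for the machine
order `⟨M3, M1, M2⟩` (i.e. `C_n^3 ≤ S_n^1` and `C_n^1 ≤ S_n^2`).
Machines `M1, M2, M3` are `0, 1, 2`. -/
theorem stmt16 {J : Type*} [DecidableEq J] (F : Finset J) (jn : J) (p q : J → ℝ)
    (hdisj : Disjoint F {jn})
    (hp : ∀ j ∈ F, 0 < p j) (hq : 0 < q jn)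
    (hF : F.Nonempty)
    (hpq : F.sup' hF p < q jn) (hPF : q jn < ∑ j ∈ F, p j) :
    ((∀ S : J → Fin 3 → ℝ, Feasible F {jn} p q S →
        S jn 1 + q jn ≤ S jn 2 → S jn 2 + q jn ≤ S jn 0 →
        2 * q jn + (∑ j ∈ F, p j) ≤ makespan F {jn} p q S) ∧
     (∃ S : J → Fin 3 → ℝ, Feasible F {jn} p q S ∧
        S jn 1 + q jn ≤ S jn 2 ∧ S jn 2 + q jn ≤ S jn 0 ∧
        makespan F {jn} p q S = 2 * q jn + ∑ j ∈ F, p j)) ∧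
    ((∀ S : J → Fin 3 → ℝ, Feasible F {jn} p q S →
        S jn 2 + q jn ≤ S jn 0 → S jn 0 + q jn ≤ S jn 1 →
        2 * q jn + (∑ j ∈ F, p j) ≤ makespan F {jn} p q S) ∧
     (∃ S : J → Fin 3 → ℝ, Feasible F {jn} p q S ∧
        S jn 2 + q jn ≤ S jn 0 ∧ S jn 0 + q jn ≤ S jn 1 ∧
        makespan F {jn} p q S = 2 * q jn + ∑ j ∈ F, p j)) := by
  have hjn : jn ∉ F := disjoint_singleton_right.1 hdisj
  have hp₀ : ∀ j ∈ F, 0 ≤ p j := fun j hj => (hp j hj).le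
  have hpq' : ∀ j ∈ F, p j ≤ q jn := fun j hj => (le_sup' p hj).trans hpq.le
  exact ⟨⟨fun S hS h12 _ => hS.two_mul_add_sum_le_makespan hjn hp₀ (by decide) h12,
      exists_schedule_M2_M3_M1 hjn hp₀ hpq' hq.le hPF.le⟩,
    fun S hS _ h01 => hS.two_mul_add_sum_le_makespan hjn hp₀ (by decide) h01,
      exists_schedule_M3_M1_M2 hjn hp₀ hpq' hq.le hPF.le⟩
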